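/- Let f be four times continuously differentiable on [x_i, x_{i+1}] with |f⁽⁴⁾(x)| ≤ L for all x ∈ [x_i, x_{i+1}], set f_i = f(x_i), f_{i+1} = f(x_{i+1}), and let ḟ_i, ḟ_{i+1} ∈ ℝ satisfy |ḟ_i − f'(x_i)| ≤ ε_i and |ḟ_{i+1} − f'(x_{i+1})| ≤ ε_{i+1}. Then the cubic Hermite interpolant P of the data (f_i, ḟ_i), (f_{i+1}, ḟ_{i+1}) satisfies, for every x ∈ [x_i, x_{i+1}], |P(x) − f(x)| ≤ L·h_i⁴/384 + h_i·(ε_i + ε_{i+1}). In particular, if ε_i = O(h_i^{q_i}) and ε_{i+1} = O(h_i^{q_{i+1}}), then P approximates f on [x_i, x_{i+1}] with order min(4, q_i + 1, q_{i+1} + 1). -/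

import Mathlib

/-!
Split the error as `(H(dᵢ, dᵢ₊₁) - H(f'(xᵢ), f'(xᵢ₊₁))) + (H(f'(xᵢ), f'(xᵢ₊₁)) - f)`.
For the second term, fix `t` and add to the exact Hermite interpolant the multiple of
`((y - xᵢ)(y - xᵢ₊₁))²` that makes it agree with `f` at `t` as well. The difference with `f` then
has double zeros at the endpoints and a zero at `t`, so by Rolle's theorem applied four times its
fourth derivative vanishes at some `ξ`; this gives the remainder
`f⁽⁴⁾(ξ)/24 · ((t - xᵢ)(t - xᵢ₊₁))²`, and `((t - xᵢ)(t - xᵢ₊₁))² ≤ h⁴/16`.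
The first term is linear in the derivative data, with coefficients
`(t - xᵢ)(t - xᵢ₊₁)²/h²` and `(t - xᵢ)²(t - xᵢ₊₁)/h²`, both bounded by `h` on the interval.
-/

open Set

/-- The cubic Hermite interpolant on `[xi, xip]` of the data
`(fi, di)`, `(fip, dip)` (values and derivatives at the endpoints). -/
noncomputable def hermite (xi xip fi fip di dip : ℝ) : ℝ → ℝ := fun t =>
  fi + di * (t - xi)
    + (((fip - fi) / (xip - xi) - di) / (xip - xi)) * (t - xi) ^ 2
    + ((dip + di - 2 * ((fip - fi) / (xip - xi))) / (xip - xi) ^ 2)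
        * (t - xi) ^ 2 * (t - xip)

section Rolle

variable {g : ℝ → ℝ} {a b : ℝ}

theorem exists_derivWithin_Icc_eq_zero (hg : DifferentiableOn ℝ g (Icc a b)) {u v : ℝ}
    (hau : a ≤ u) (hvb : v ≤ b) (huv : u < v) (hguv : g u = g v) :
    ∃ c ∈ Ioo u v, derivWithin g (Icc a b) c = 0 := by
  obtain ⟨c, hc, hgc⟩ :=
    exists_deriv_eq_zero huv (hg.continuousOn.mono (Icc_subset_Icc hau hvb)) hguv
  refine ⟨c, hc, ?_⟩
  rwa [derivWithin_of_mem_nhds (Icc_mem_nhds (hau.trans_lt hc.1) (hc.2.trans_le hvb))]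

theorem exists_iteratedDerivWithin_eq_zero {n : ℕ} (hg : ContDiffOn ℝ n g (Icc a b))
    {x : Fin (n + 1) → ℝ} (hx : StrictMono x) (hxab : ∀ i, x i ∈ Icc a b)
    (hgx : ∀ i, g (x i) = 0) :
    ∃ ξ ∈ Icc a b, iteratedDerivWithin n g (Icc a b) ξ = 0 := by
  induction n generalizing g with
  | zero => exact ⟨x 0, hxab 0, by simpa using hgx 0⟩
  | succ n ih =>
    have hab : a < b := (hxab 0).1.trans_lt ((hx Fin.zero_lt_one).trans_le (hxab 1).2)
    have hgd : DifferentiableOn ℝ g (Icc a b) := hg.differentiableOn (by simp)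
    choose y hy hgy using fun i : Fin (n + 1) =>
      exists_derivWithin_Icc_eq_zero hgd (hxab i.castSucc).1 (hxab i.succ).2
        (hx Fin.castSucc_lt_succ) ((hgx _).trans (hgx _).symm)
    have hy_mono : StrictMono y := Fin.strictMono_iff_lt_succ.2 fun i =>
      calc y i.castSucc < x i.castSucc.succ := (hy _).2
        _ = x i.succ.castSucc := by rw [Fin.succ_castSucc]
        _ < y i.succ := (hy _).1
    have hyab : ∀ i, y i ∈ Icc a b := fun i =>
      ⟨(hxab _).1.trans (hy i).1.le, (hy i).2.le.trans (hxab _).2⟩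
    rw [iteratedDerivWithin_succ']
    exact ih (hg.derivWithin (uniqueDiffOn_Icc hab) (by simp)) hy_mono hyab hgy

theorem exists_iteratedDerivWithin_four_eq_zero (hg : ContDiffOn ℝ 4 g (Icc a b)) {t : ℝ}
    (ht : t ∈ Ioo a b) (hga : g a = 0) (hgt : g t = 0) (hgb : g b = 0)
    (hg'a : derivWithin g (Icc a b) a = 0) (hg'b : derivWithin g (Icc a b) b = 0) :
    ∃ ξ ∈ Icc a b, iteratedDerivWithin 4 g (Icc a b) ξ = 0 := by
  have hab : a < b := ht.1.trans ht.2
  have hgd : DifferentiableOn ℝ g (Icc a b) := hg.differentiableOn (by simp)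
  obtain ⟨u, hu, hgu⟩ :=
    exists_derivWithin_Icc_eq_zero hgd le_rfl ht.2.le ht.1 (hga.trans hgt.symm)
  obtain ⟨v, hv, hgv⟩ :=
    exists_derivWithin_Icc_eq_zero hgd ht.1.le le_rfl ht.2 (hgt.trans hgb.symm)
  have hmono : StrictMono ![a, u, v, b] := Fin.strictMono_iff_lt_succ.2 fun i => by
    fin_cases i
    exacts [hu.1, hu.2.trans hv.1, hv.2]
  have hmem : ∀ i, ![a, u, v, b] i ∈ Icc a b := fun i => by
    fin_cases i
    exacts [left_mem_Icc.2 hab.le, ⟨hu.1.le, hu.2.le.trans ht.2.le⟩,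
      ⟨ht.1.le.trans hv.1.le, hv.2.le⟩, right_mem_Icc.2 hab.le]
  rw [iteratedDerivWithin_succ']
  refine exists_iteratedDerivWithin_eq_zero (hg.derivWithin (uniqueDiffOn_Icc hab) le_rfl)
    hmono hmem fun i => ?_
  fin_cases i
  exacts [hg'a, hgu, hgv, hg'b]

end Rolle

theorem iteratedDeriv_four_quartic (a c₀ c₁ c₂ c₃ c₄ y : ℝ) :
    iteratedDeriv 4
      (fun y => c₀ + c₁ * (y - a) + c₂ * (y - a) ^ 2 + c₃ * (y - a) ^ 3 + c₄ * (y - a) ^ 4) y =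
      24 * c₄ := by
  rw [congrFun (iteratedDeriv_comp_sub_const 4
      (fun u => c₀ + c₁ * u + c₂ * u ^ 2 + c₃ * u ^ 3 + c₄ * u ^ 4) a) y,
    iteratedDeriv_fun_add (by fun_prop) (by fun_prop),
    iteratedDeriv_fun_add (by fun_prop) (by fun_prop),
    iteratedDeriv_fun_add (by fun_prop) (by fun_prop),
    iteratedDeriv_fun_add (by fun_prop) (by fun_prop),
    iteratedDeriv_const_mul_field c₁ (fun u => u)]
  simp [iteratedDeriv_const_mul_field, iteratedDeriv_const, iteratedDeriv_fun_id]
  norm_num [Nat.descFactorial, mul_comm]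

theorem hasDerivAt_sub_mul_sub_sq (a b x : ℝ) (hx : (x - a) * (x - b) = 0) :
    HasDerivAt (fun y => ((y - a) * (y - b)) ^ 2) 0 x := by
  simpa [hx] using
    (((hasDerivAt_id' x).sub_const a).mul ((hasDerivAt_id' x).sub_const b)).fun_pow 2

section Hermite

variable (xi xip fi fip di dip : ℝ)

theorem hermite_apply_left : hermite xi xip fi fip di dip xi = fi := by
  simp [hermite]

theorem hermite_apply_right (h : xi ≠ xip) : hermite xi xip fi fip di dip xip = fip := by
  have : xip - xi ≠ 0 := sub_ne_zero.2 h.symm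
  simp only [hermite]
  field_simp
  ring

theorem contDiff_hermite {n : WithTop ℕ∞} : ContDiff ℝ n (hermite xi xip fi fip di dip) := by
  unfold hermite
  fun_prop

theorem hasDerivAt_hermite (t : ℝ) :
    HasDerivAt (hermite xi xip fi fip di dip)
      (di + 2 * (((fip - fi) / (xip - xi) - di) / (xip - xi)) * (t - xi)
        + ((dip + di - 2 * ((fip - fi) / (xip - xi))) / (xip - xi) ^ 2)
          * ((t - xi) * (3 * t - xi - 2 * xip))) t := by
  have hu : HasDerivAt (fun y => y - xi) 1 t := (hasDerivAt_id t).sub_const xi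
  have hv : HasDerivAt (fun y => y - xip) 1 t := (hasDerivAt_id t).sub_const xip
  have hu2 := hu.fun_pow 2
  exact ((((hasDerivAt_const t fi).add (hu.const_mul di)).add (hu2.const_mul _)).add
    ((hu2.const_mul _).mul hv)).congr_deriv (by ring)

theorem hasDerivAt_hermite_left : HasDerivAt (hermite xi xip fi fip di dip) di xi := by
  simpa using hasDerivAt_hermite xi xip fi fip di dip xi

theorem hasDerivAt_hermite_right (h : xi ≠ xip) :
    HasDerivAt (hermite xi xip fi fip di dip) dip xip := by
  have : xip - xi ≠ 0 := sub_ne_zero.2 h.symm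
  refine (hasDerivAt_hermite xi xip fi fip di dip xip).congr_deriv ?_
  field_simp
  ring

theorem iteratedDeriv_four_hermite_add (K y : ℝ) :
    iteratedDeriv 4 (fun y => hermite xi xip fi fip di dip y + K * ((y - xi) * (y - xip)) ^ 2) y =
      24 * K := by
  obtain ⟨A, B, hH⟩ : ∃ A B : ℝ, hermite xi xip fi fip di dip =
      fun y => fi + di * (y - xi) + A * (y - xi) ^ 2 + B * (y - xi) ^ 2 * (y - xip) :=
    ⟨_, _, rfl⟩
  have hq : (fun y => hermite xi xip fi fip di dip y + K * ((y - xi) * (y - xip)) ^ 2) =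
      fun y => fi + di * (y - xi) + (A - B * (xip - xi) + K * (xip - xi) ^ 2) * (y - xi) ^ 2
        + (B - 2 * K * (xip - xi)) * (y - xi) ^ 3 + K * (y - xi) ^ 4 := by
    funext y
    rw [hH]
    ring
  rw [hq, iteratedDeriv_four_quartic]

theorem hermite_sub_hermite (h : xi ≠ xip) (di' dip' t : ℝ) :
    hermite xi xip fi fip di dip t - hermite xi xip fi fip di' dip' t =
      (di - di') * ((t - xi) * (t - xip) ^ 2 / (xip - xi) ^ 2)
        + (dip - dip') * ((t - xi) ^ 2 * (t - xip) / (xip - xi) ^ 2) := by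
  have : xip - xi ≠ 0 := sub_ne_zero.2 h.symm
  simp only [hermite]
  field_simp
  ring

end Hermite

section ErrorBound

variable {f : ℝ → ℝ} {a b : ℝ}

theorem exists_sub_hermite_eq (hab : a < b) (hf : ContDiffOn ℝ 4 f (Icc a b)) {t : ℝ}
    (ht : t ∈ Icc a b) :
    ∃ ξ ∈ Icc a b, f t - hermite a b (f a) (f b) (derivWithin f (Icc a b) a)
        (derivWithin f (Icc a b) b) t =
      iteratedDerivWithin 4 f (Icc a b) ξ / 24 * ((t - a) * (t - b)) ^ 2 := by
  rcases eq_endpoints_or_mem_Ioo_of_mem_Icc ht with rfl | rfl | hto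
  · exact ⟨t, ht, by simp [hermite_apply_left]⟩
  · exact ⟨t, ht, by simp [hermite_apply_right _ _ _ _ _ _ hab.ne]⟩
  set s := Icc a b
  set H := hermite a b (f a) (f b) (derivWithin f s a) (derivWithin f s b)
  have hw : ((t - a) * (t - b)) ^ 2 ≠ 0 :=
    pow_ne_zero 2 (mul_ne_zero (sub_ne_zero.2 hto.1.ne') (sub_ne_zero.2 hto.2.ne))
  set K := (f t - H t) / ((t - a) * (t - b)) ^ 2 with hK
  set q := fun y => H y + K * ((y - a) * (y - b)) ^ 2
  have hs : UniqueDiffOn ℝ s := uniqueDiffOn_Icc hab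
  have hqC : ContDiff ℝ 4 q := (contDiff_hermite ..).add (by fun_prop)
  have hderiv {x : ℝ} (hx : x ∈ s) (hqx : HasDerivAt q (derivWithin f s x) x) :
      derivWithin (f - q) s x = 0 := by
    have hfx := ((hf.differentiableOn (by simp)) x hx).hasDerivWithinAt
    simpa using (hfx.sub hqx.hasDerivWithinAt).derivWithin (hs x hx)
  have hqa : HasDerivAt q (derivWithin f s a) a :=
    ((hasDerivAt_hermite_left ..).add
      ((hasDerivAt_sub_mul_sub_sq a b a (by simp)).const_mul K)).congr_deriv (by simp)
  have hqb : HasDerivAt q (derivWithin f s b) b :=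
    ((hasDerivAt_hermite_right _ _ _ _ _ _ hab.ne).add
      ((hasDerivAt_sub_mul_sub_sq a b b (by simp)).const_mul K)).congr_deriv (by simp)
  obtain ⟨ξ, hξ, h4⟩ := exists_iteratedDerivWithin_four_eq_zero (g := f - q)
    (hf.sub hqC.contDiffOn) hto (by simp [q, H, hermite_apply_left])
    (by simp [q, hK, div_mul_cancel₀ _ hw])
    (by simp [q, H, hermite_apply_right _ _ _ _ _ _ hab.ne])
    (hderiv (left_mem_Icc.2 hab.le) hqa) (hderiv (right_mem_Icc.2 hab.le) hqb)
  rw [iteratedDerivWithin_sub hξ hs (hf ξ hξ) hqC.contDiffWithinAt,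
    iteratedDerivWithin_eq_iteratedDeriv hs hqC.contDiffAt hξ,
    iteratedDeriv_four_hermite_add] at h4
  refine ⟨ξ, hξ, ?_⟩
  have hK4 : K = iteratedDerivWithin 4 f s ξ / 24 := by linarith
  rw [← div_mul_cancel₀ (f t - H t) hw, ← hK, hK4]

theorem sub_mul_sub_sq_le {t : ℝ} (ht : t ∈ Icc a b) :
    ((t - a) * (t - b)) ^ 2 ≤ (b - a) ^ 4 / 16 := by
  have h0 : 0 ≤ (t - a) * (b - t) := mul_nonneg (sub_nonneg.2 ht.1) (sub_nonneg.2 ht.2)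
  have h1 : (t - a) * (b - t) ≤ (b - a) ^ 2 / 4 := by nlinarith [sq_nonneg (2 * t - a - b)]
  calc ((t - a) * (t - b)) ^ 2 = ((t - a) * (b - t)) ^ 2 := by ring
    _ ≤ ((b - a) ^ 2 / 4) ^ 2 := pow_le_pow_left₀ h0 h1 2
    _ = (b - a) ^ 4 / 16 := by ring

theorem abs_hermite_sub_le {L : ℝ} (hab : a < b) (hf : ContDiffOn ℝ 4 f (Icc a b))
    (hL : ∀ t ∈ Icc a b, |iteratedDerivWithin 4 f (Icc a b) t| ≤ L) {t : ℝ}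
    (ht : t ∈ Icc a b) :
    |hermite a b (f a) (f b) (derivWithin f (Icc a b) a) (derivWithin f (Icc a b) b) t - f t| ≤
      L * (b - a) ^ 4 / 384 := by
  obtain ⟨ξ, hξ, hrem⟩ := exists_sub_hermite_eq hab hf ht
  have hL0 : 0 ≤ L := (abs_nonneg _).trans (hL ξ hξ)
  rw [abs_sub_comm, hrem, abs_mul, abs_of_nonneg (sq_nonneg ((t - a) * (t - b))), abs_div,
    abs_of_pos (by norm_num : (0 : ℝ) < 24)]
  calc |iteratedDerivWithin 4 f (Icc a b) ξ| / 24 * ((t - a) * (t - b)) ^ 2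
      ≤ L / 24 * ((b - a) ^ 4 / 16) := by
        gcongr
        exacts [hL ξ hξ, sub_mul_sub_sq_le ht]
    _ = L * (b - a) ^ 4 / 384 := by ring

theorem abs_mul_sq_div_sq_le {u v h : ℝ} (hu : |u| ≤ h) (hv : |v| ≤ h) :
    |u * v ^ 2 / h ^ 2| ≤ h := by
  have h0 : 0 ≤ h := (abs_nonneg u).trans hu
  rw [abs_div, abs_mul, abs_pow, abs_pow, abs_of_nonneg h0]
  refine div_le_of_le_mul₀ (by positivity) h0 ?_
  gcongr

theorem abs_hermite_sub_hermite_le (hab : a < b) (fa fb da db da' db' : ℝ) {t : ℝ}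
    (ht : t ∈ Icc a b) :
    |hermite a b fa fb da db t - hermite a b fa fb da' db' t| ≤
      (b - a) * (|da - da'| + |db - db'|) := by
  have hta : |t - a| ≤ b - a := abs_le.2 ⟨by linarith [ht.1, ht.2], by linarith [ht.2]⟩
  have htb : |t - b| ≤ b - a := abs_le.2 ⟨by linarith [ht.1], by linarith [ht.1, ht.2]⟩
  rw [hermite_sub_hermite _ _ _ _ _ _ hab.ne]
  calc _ ≤ |da - da'| * |(t - a) * (t - b) ^ 2 / (b - a) ^ 2|
        + |db - db'| * |(t - a) ^ 2 * (t - b) / (b - a) ^ 2| := by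
        rw [← abs_mul, ← abs_mul]
        exact abs_add_le _ _
    _ ≤ |da - da'| * (b - a) + |db - db'| * (b - a) := by
        gcongr
        · exact abs_mul_sq_div_sq_le hta htb
        · rw [mul_comm]
          exact abs_mul_sq_div_sq_le htb hta
    _ = (b - a) * (|da - da'| + |db - db'|) := by ring

end ErrorBound

/-- Error bound for cubic Hermite interpolation with perturbed derivative data:
if `f ∈ C⁴([xᵢ, xᵢ₊₁])` with `|f⁽⁴⁾| ≤ L` and the derivative data are within
`εᵢ`, `εᵢ₊₁` of `f'(xᵢ)`, `f'(xᵢ₊₁)`, then the interpolation error is at most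
`L·h⁴/384 + h·(εᵢ + εᵢ₊₁)`; in particular, with `εᵢ = O(h^{qᵢ})` the order of
approximation is `min(4, qᵢ + 1, qᵢ₊₁ + 1)`. -/
theorem hermite_error_bound (xi xip L εi εip di dip : ℝ) (f : ℝ → ℝ) (hx : xi < xip)
    (hf : ContDiffOn ℝ 4 f (Set.Icc xi xip))
    (hL : ∀ t ∈ Set.Icc xi xip, |iteratedDerivWithin 4 f (Set.Icc xi xip) t| ≤ L)
    (hdi : |di - derivWithin f (Set.Icc xi xip) xi| ≤ εi)
    (hdip : |dip - derivWithin f (Set.Icc xi xip) xip| ≤ εip) :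
    ∀ t ∈ Set.Icc xi xip,
      |hermite xi xip (f xi) (f xip) di dip t - f t|
        ≤ L * (xip - xi) ^ 4 / 384 + (xip - xi) * (εi + εip) := by
  intro t ht
  set D := derivWithin f (Icc xi xip)
  have hexact := abs_hermite_sub_le hx hf hL ht
  have hpert := abs_hermite_sub_hermite_le hx (f xi) (f xip) di dip (D xi) (D xip) ht
  have hε : (xip - xi) * (|di - D xi| + |dip - D xip|) ≤ (xip - xi) * (εi + εip) := by gcongr
  calc _ ≤ _ := abs_sub_le _ (hermite xi xip (f xi) (f xip) (D xi) (D xip) t) _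
    _ ≤ _ := by linarith
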